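/- Equivalence of (PEI) and (PNFI): Under the sequential model with 𝒳 = {1,…,X}, X = min{n : V_n = 1} for independent Bernoulli variables (V_n)_{0≤n≤M} with P(V_n = 1) = q_n/Q_n, and objective σ-field generated by U and the V_n, a probability P_A satisfying (PN) satisfies (PEI) if and only if it satisfies (PNFI): P_A(G | S = n) = P(G) whenever 0 ≤ n ≤ M and G ∈ σ(V_n, …, V_M, U). -/

import Mathlib

open scoped Classical
open Finset

/-!
Let `L n` be the event `V_0 = ⋯ = V_{n-1} = 0` and let `resetBefore n` set `V_0, …, V_{n-1}`
to `0`. Since `V_M = 1` almost surely, `{X ≥ n} = L n` almost surely, and `L n` is independent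
of `σ(U, V_n, …, V_M)`; hence `P(F | X ≥ n) = P(resetBefore n ⁻¹ F)` for every objective `F`.
Under (PN), `P_A`-almost surely `S = n` forces `X ≥ n`, so `resetBefore n` is the identity there
and `P_A(F | S = n) = P_A(resetBefore n ⁻¹ F | S = n)`. Because `resetBefore n ⁻¹ F` lies in
`σ(U, V_n, …, V_M)`, and `resetBefore n ⁻¹ G = G` for `G` in that σ-field, each of (PEI) and
(PNFI) yields the other.
-/

/-- Probability of a set under a weight function on a finite type. -/
noncomputable def pr {α : Type*} [Fintype α] (μ : α → ℝ) (A : Set α) : ℝ :=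
  ∑ a : α, if a ∈ A then μ a else 0

/-- Conditional probability. -/
noncomputable def cpr {α : Type*} [Fintype α] (μ : α → ℝ) (A B : Set α) : ℝ :=
  pr μ (A ∩ B) / pr μ B

/-- Expectation. -/
noncomputable def ex {α : Type*} [Fintype α] (μ : α → ℝ) (f : α → ℝ) : ℝ :=
  ∑ a : α, μ a * f a

/-- A probability weight: nonnegative and summing to one. -/
def IsProb {α : Type*} [Fintype α] (μ : α → ℝ) : Prop :=
  (∀ a, 0 ≤ μ a) ∧ ∑ a : α, μ a = 1

section WeightedSums

variable {α : Type*} [Fintype α] {μ : α → ℝ} {A B : Set α}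

theorem pr_eq_zero (h : ∀ a ∈ A, μ a = 0) : pr μ A = 0 :=
  sum_eq_zero fun a _ => by split_ifs with ha <;> simp [h a, ha]

theorem eq_zero_of_pr_eq_zero (hμ : ∀ a, 0 ≤ μ a) (hA : pr μ A = 0) {a : α} (ha : a ∈ A) :
    μ a = 0 := by
  have hterm := (sum_eq_zero_iff_of_nonneg fun b _ => ?_).1 hA a (mem_univ a)
  · simpa [ha] using hterm
  · split_ifs
    exacts [hμ b, le_rfl]

theorem pr_add_pr_compl (μ : α → ℝ) (A : Set α) : pr μ A + pr μ Aᶜ = ∑ a, μ a := by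
  rw [pr, pr, ← sum_add_distrib]
  exact sum_congr rfl fun a _ => by by_cases ha : a ∈ A <;> simp [ha]

theorem eq_zero_of_pr_eq_one (hμ : IsProb μ) (hA : pr μ A = 1) {a : α} (ha : a ∉ A) :
    μ a = 0 :=
  eq_zero_of_pr_eq_zero (A := Aᶜ) hμ.1 (by linarith [pr_add_pr_compl μ A, hμ.2]) ha

theorem pr_congr (h : ∀ a, μ a ≠ 0 → (a ∈ A ↔ a ∈ B)) : pr μ A = pr μ B :=
  sum_congr rfl fun a _ => by
    by_cases ha : μ a = 0
    · simp [ha]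
    · simp only [h a ha]

theorem cpr_congr_left {A' : Set α}
    (h : ∀ a, μ a ≠ 0 → a ∈ B → (a ∈ A ↔ a ∈ A')) : cpr μ A B = cpr μ A' B := by
  rw [cpr, cpr, pr_congr (A := A ∩ B) (B := A' ∩ B) fun a ha => and_congr_left (h a ha)]

end WeightedSums

section ProductWeights

variable {ι : Type*} [Fintype ι] [DecidableEq ι] {β : ι → Type*} [∀ i, Fintype (β i)]
  (φ : ∀ i, β i → ℝ) (q : ι → Prop) [DecidablePred q]

theorem sum_prod_mul_eq_sum_sum_subtype (K : (∀ i, β i) → ℝ) :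
    ∑ v : ∀ i, β i, (∏ i, φ i (v i)) * K v =
      ∑ x : (∀ i : {i // q i}, β i), ∑ y : (∀ i : {i // ¬ q i}, β i),
        (∏ i, φ _ (x i)) * (∏ i, φ _ (y i)) *
          K ((Equiv.piEquivPiSubtypeProd q β).symm (x, y)) := by
  rw [← Fintype.sum_prod_type', ← (Equiv.piEquivPiSubtypeProd q β).symm.sum_comp]
  refine sum_congr rfl fun z _ => ?_
  rw [← Fintype.prod_subtype_mul_prod_subtype q]
  congr 2 <;> exact Fintype.prod_congr _ _ fun i => by simp [i.2]

theorem sum_prod_mul_restrict_mul_restrict (hφ : ∀ i, ∑ b, φ i b = 1)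
    (F : (∀ i : {i // ¬ q i}, β i) → ℝ) (G : (∀ i : {i // q i}, β i) → ℝ) :
    ∑ v : ∀ i, β i, (∏ i, φ i (v i)) * (F (fun i => v i) * G (fun i => v i)) =
      (∑ v : ∀ i, β i, (∏ i, φ i (v i)) * F (fun i => v i)) *
        ∑ v : ∀ i, β i, (∏ i, φ i (v i)) * G (fun i => v i) := by
  have hpast (x y) : (fun i : {i // q i} => (Equiv.piEquivPiSubtypeProd q β).symm (x, y) i) = x :=
    congrArg Prod.fst ((Equiv.piEquivPiSubtypeProd q β).apply_symm_apply (x, y))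
  have hfuture (x y) :
      (fun i : {i // ¬ q i} => (Equiv.piEquivPiSubtypeProd q β).symm (x, y) i) = y :=
    congrArg Prod.snd ((Equiv.piEquivPiSubtypeProd q β).apply_symm_apply (x, y))
  simp only [sum_prod_mul_eq_sum_sum_subtype φ q, hpast, hfuture]
  have hF : ∀ f : (∀ i : {i // ¬ q i}, β i) → ℝ,
      ∑ x : (∀ i : {i // q i}, β i), ∑ y, (∏ i, φ _ (x i)) * (∏ i, φ _ (y i)) * f y =
        ∑ y, (∏ i, φ _ (y i)) * f y := fun f => by
    simp_rw [mul_assoc, ← mul_sum, ← sum_mul, ← Fintype.prod_sum, hφ, prod_const_one, one_mul]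
  have hG : ∀ g : (∀ i : {i // q i}, β i) → ℝ,
      ∑ x, ∑ y : (∀ i : {i // ¬ q i}, β i), (∏ i, φ _ (x i)) * (∏ i, φ _ (y i)) * g x =
        ∑ x, (∏ i, φ _ (x i)) * g x := fun g => by
    simp_rw [mul_right_comm _ _ (g _), ← mul_sum, ← Fintype.prod_sum, hφ, prod_const_one, mul_one]
  rw [hF, hG, mul_comm, sum_mul_sum]
  exact sum_congr rfl fun x _ => sum_congr rfl fun y _ => by ring

end ProductWeights

section ProductModel

variable {γ ι : Type*} [Fintype γ] [Fintype ι] [DecidableEq ι] {μ : γ → ℝ} {p : ι → ℝ}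
  {P0 : γ × (ι → Bool) → ℝ}

theorem pr_eq_sum_mul_sum (hP0 : ∀ u v, P0 (u, v) = μ u * ∏ k, (if v k then p k else 1 - p k))
    (A : Set (γ × (ι → Bool))) :
    pr P0 A = ∑ u, μ u *
      ∑ v, (∏ k, (if v k then p k else 1 - p k)) * A.indicator 1 (u, v) := by
  rw [pr, Fintype.sum_prod_type]
  refine sum_congr rfl fun u _ => ?_
  rw [mul_sum]
  refine sum_congr rfl fun v _ => ?_
  by_cases h : (u, v) ∈ A <;> simp [h, hP0]

theorem pr_inter_eq_mul_of_indep (hμ : ∑ u, μ u = 1)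
    (hP0 : ∀ u v, P0 (u, v) = μ u * ∏ k, (if v k then p k else 1 - p k))
    (q : ι → Prop) [DecidablePred q] (A : Set (γ × (ι → Bool)))
    (hA : ∀ u v v', (∀ i, ¬ q i → v i = v' i) → ((u, v) ∈ A ↔ (u, v') ∈ A))
    (L : Set (ι → Bool)) (hL : ∀ v v', (∀ i, q i → v i = v' i) → (v ∈ L ↔ v' ∈ L)) :
    pr P0 (A ∩ {o | o.2 ∈ L}) = pr P0 A * pr P0 {o | o.2 ∈ L} := by
  let e := Equiv.piEquivPiSubtypeProd q (fun _ => Bool)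
  let F (u : γ) (y : ∀ i : {i // ¬ q i}, Bool) : ℝ :=
    if (u, e.symm (fun _ => false, y)) ∈ A then 1 else 0
  let G (x : ∀ i : {i // q i}, Bool) : ℝ := if e.symm (x, fun _ => false) ∈ L then 1 else 0
  have hF (u v) : A.indicator (1 : γ × (ι → Bool) → ℝ) (u, v) = F u (fun i => v i) := by
    refine (Set.indicator_apply _ _ _).trans (if_congr (hA u _ _ fun i hi => ?_) rfl rfl)
    simp [e, Equiv.piEquivPiSubtypeProd_symm_apply, hi]
  have hG (u v) : {o : γ × (ι → Bool) | o.2 ∈ L}.indicator (1 : γ × (ι → Bool) → ℝ) (u, v) =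
      G (fun i => v i) := by
    refine (Set.indicator_apply _ _ _).trans (if_congr (hL _ _ fun i hi => ?_) rfl rfl)
    simp [e, Equiv.piEquivPiSubtypeProd_symm_apply, hi]
  have hφ (i : ι) : ∑ b : Bool, (if b then p i else 1 - p i) = 1 := by simp
  simp only [pr_eq_sum_mul_sum hP0, Set.inter_indicator_one, Pi.mul_apply, hF, hG,
    sum_prod_mul_restrict_mul_restrict _ q hφ]
  rw [← sum_mul, hμ, one_mul, sum_mul]
  simp_rw [mul_assoc]

end ProductModel

section ResetBefore

variable {ι : Type*} [LinearOrder ι] {n : ι} {v v' : ι → Bool}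

def resetBefore (n : ι) (v : ι → Bool) : ι → Bool :=
  fun k => if k < n then false else v k

theorem resetBefore_of_le {k : ι} (h : n ≤ k) : resetBefore n v k = v k :=
  if_neg (not_lt.2 h)

theorem resetBefore_eq_self (h : ∀ k < n, v k = false) : resetBefore n v = v :=
  funext fun k => by by_cases hk : k < n <;> simp [resetBefore, hk, h]

theorem resetBefore_congr (h : ∀ k, n ≤ k → v k = v' k) : resetBefore n v = resetBefore n v' :=
  funext fun k => by
    unfold resetBefore
    split_ifs with hk
    exacts [rfl, h k (not_lt.1 hk)]

theorem setOf_resetBefore_mem_eq {γ : Type*} {G : Set (γ × (ι → Bool))}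
    (hG : ∀ u v v', (∀ k, n ≤ k → v k = v' k) → ((u, v) ∈ G ↔ (u, v') ∈ G)) :
    {o : γ × (ι → Bool) | (o.1, resetBefore n o.2) ∈ G} = G :=
  Set.ext fun o => hG o.1 _ _ fun _ hk => resetBefore_of_le hk

end ResetBefore

section Support

variable {α β : Type*} [Fintype α] [Fintype β] {P : α → ℝ} {Q : α × β → ℝ}

theorem fst_of_ne_zero_of_absolutelyContinuous (hQ : ∀ ω, 0 ≤ Q ω)
    (hQP : ∀ F : Set α, pr P F = 0 → pr Q {ω | ω.1 ∈ F} = 0)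
    {R : α → Prop} (hR : ∀ a, P a ≠ 0 → R a) {ω : α × β} (hω : Q ω ≠ 0) : R ω.1 := by
  by_contra h
  refine hω (eq_zero_of_pr_eq_zero hQ (hQP {a | ¬ R a} (pr_eq_zero fun a ha => ?_)) h)
  by_contra hP
  exact ha (hR a hP)

theorem pr_ne_zero_of_absolutelyContinuous (hQ : ∀ ω, 0 ≤ Q ω)
    (hQP : ∀ F : Set α, pr P F = 0 → pr Q {ω | ω.1 ∈ F} = 0)
    {A : Set α} {B : Set (α × β)} (hB : ∀ ω, Q ω ≠ 0 → ω ∈ B → ω.1 ∈ A) (hpos : pr Q B ≠ 0) :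
    pr P A ≠ 0 := by
  intro hA
  refine hpos (pr_eq_zero fun ω hω => ?_)
  by_contra hQω
  exact hQω (eq_zero_of_pr_eq_zero hQ (hQP A hA) (hB ω hQω hω))

end Support

section SequentialModel

variable {M : ℕ} {γ : Type*} {μ : γ → ℝ} {p : Fin (M + 1) → ℝ}
  {P0 : γ × (Fin (M + 1) → Bool) → ℝ} {X : (Fin (M + 1) → Bool) → ℕ}

theorem last_eq_true_of_ne_zero
    (hP0 : ∀ u v, P0 (u, v) = μ u * ∏ k, (if v k then p k else 1 - p k))
    (hpM : p (Fin.last M) = 1) {o : γ × (Fin (M + 1) → Bool)} (ho : P0 o ≠ 0) :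
    o.2 (Fin.last M) = true := by
  by_contra h
  refine ho ?_
  rw [← Prod.mk.eta (p := o), hP0, prod_eq_zero (mem_univ (Fin.last M)) (by simp [h, hpM]),
    mul_zero]

theorem le_X_iff
    (hX : ∀ (v : Fin (M + 1) → Bool) (n : Fin (M + 1)),
      v n = true → (∀ m : Fin (M + 1), m < n → v m = false) → X v = n.val)
    {v : Fin (M + 1) → Bool} (hv : v (Fin.last M) = true) (n : Fin (M + 1)) :
    n.val ≤ X v ↔ ∀ k < n, v k = false := by
  obtain ⟨j, hj, hmin⟩ := (univ.filter fun k => v k = true).exists_min_image id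
    ⟨Fin.last M, by simp [hv]⟩
  simp only [mem_filter, mem_univ, true_and, id] at hj hmin
  have hfirst : ∀ m < j, v m = false := fun m hm => by
    by_contra h
    exact absurd (hmin m (by simpa using h)) (not_le.2 hm)
  rw [hX v j hj hfirst, ← Fin.le_def]
  refine ⟨fun hnj k hk => hfirst k (hk.trans_le hnj), fun h => ?_⟩
  by_contra hjn
  simp [h j (not_le.1 hjn)] at hj

theorem cpr_le_X_eq_pr_setOf_resetBefore [Fintype γ] (hμ : ∑ u, μ u = 1)
    (hP0 : ∀ u v, P0 (u, v) = μ u * ∏ k, (if v k then p k else 1 - p k))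
    (hpM : p (Fin.last M) = 1)
    (hX : ∀ (v : Fin (M + 1) → Bool) (n : Fin (M + 1)),
      v n = true → (∀ m : Fin (M + 1), m < n → v m = false) → X v = n.val)
    (n : Fin (M + 1)) (F : Set (γ × (Fin (M + 1) → Bool)))
    (hn : pr P0 {o | n.val ≤ X o.2} ≠ 0) :
    cpr P0 F {o | n.val ≤ X o.2} = pr P0 {o | (o.1, resetBefore n o.2) ∈ F} := by
  set L : Set (Fin (M + 1) → Bool) := {v | ∀ k < n, v k = false}
  have hpast (o) (ho : P0 o ≠ 0) : o ∈ {o | n.val ≤ X o.2} ↔ o ∈ {o | o.2 ∈ L} :=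
    le_X_iff hX (last_eq_true_of_ne_zero hP0 hpM ho) n
  have hindep := pr_inter_eq_mul_of_indep hμ hP0 (· < n) {o | (o.1, resetBefore n o.2) ∈ F}
    (fun u v v' h => by
      simp only [Set.mem_ofPred_eq, resetBefore_congr fun k hk => h k (not_lt.2 hk)])
    L (fun v v' h => forall₂_congr fun k hk => by rw [h k hk])
  rw [cpr, div_eq_iff hn, pr_congr hpast, ← hindep]
  refine pr_congr fun o ho => ?_
  rw [Set.mem_inter_iff, Set.mem_inter_iff, hpast o ho]
  refine and_congr_left fun hL => ?_
  simp only [Set.mem_ofPred_eq, resetBefore_eq_self hL]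

end SequentialModel

/-- The objective space `γ × (Fin (M + 1) → Bool)` carries `U` and `V_0, …, V_M`, with
`p n` standing for `q_n / Q_n`; `PA` is a joint law of the objective outcome and the day `S`. -/
theorem stmt15_general (M : ℕ) {γ : Type*} [Fintype γ]
    (μ : γ → ℝ) (hμ : IsProb μ)
    (p : Fin (M + 1) → ℝ) (hpM : p (Fin.last M) = 1)
    (P0 : γ × (Fin (M + 1) → Bool) → ℝ)
    (hP0 : ∀ (u : γ) (v : Fin (M + 1) → Bool),
      P0 (u, v) = μ u * ∏ k, (if v k then p k else 1 - p k))
    (X : (Fin (M + 1) → Bool) → ℕ)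
    (hX : ∀ (v : Fin (M + 1) → Bool) (n : Fin (M + 1)),
      v n = true → (∀ m : Fin (M + 1), m < n → v m = false) → X v = n.val)
    (𝒳 : γ × (Fin (M + 1) → Bool) → Finset (Fin (M + 1)))
    (h𝒳 : ∀ o, 𝒳 o = Finset.univ.filter (fun k : Fin (M + 1) => 1 ≤ k.val ∧ k.val ≤ X o.2))
    (PA : (γ × (Fin (M + 1) → Bool)) × Option (Fin (M + 1)) → ℝ) (hPA : IsProb PA)
    -- (PN)
    (hPN1 : ∀ F : Set (γ × (Fin (M + 1) → Bool)),
      pr P0 F = 0 → pr PA {ω | ω.1 ∈ F} = 0)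
    (hPN2 : pr PA {ω | ∃ x : Fin (M + 1), ω.2 = some x ∧ x ∈ 𝒳 ω.1} = 1) :
    -- (PEI) ↔ (PNFI)
    ((∀ (F : Set (γ × (Fin (M + 1) → Bool))) (n : Fin (M + 1)),
        0 < pr PA {ω | ω.2 = some n} →
        cpr PA {ω | ω.1 ∈ F} {ω | ω.2 = some n} = cpr P0 F {o | n.val ≤ X o.2})
      ↔
      (∀ (n : Fin (M + 1)) (G : Set (γ × (Fin (M + 1) → Bool))),
        -- G is measurable with respect to σ(V_n, …, V_M, U)
        (∀ (u : γ) (v v' : Fin (M + 1) → Bool),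
          (∀ k : Fin (M + 1), n ≤ k → v k = v' k) → ((u, v) ∈ G ↔ (u, v') ∈ G)) →
        0 < pr PA {ω | ω.2 = some n} →
        cpr PA {ω | ω.1 ∈ G} {ω | ω.2 = some n} = pr P0 G)) := by
  have hday_le_X (ω) (n : Fin (M + 1)) (hω : PA ω ≠ 0) (hS : ω.2 = some n) : n.val ≤ X ω.1.2 := by
    by_contra h
    refine hω (eq_zero_of_pr_eq_one hPA hPN2 ?_)
    rintro ⟨x, hx, hx𝒳⟩
    rw [hS, Option.some_inj] at hx
    subst hx
    exact h (mem_filter.1 (h𝒳 ω.1 ▸ hx𝒳)).2.2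
  have hpast (ω) (n : Fin (M + 1)) (hω : PA ω ≠ 0) (hS : ω.2 = some n) :
      resetBefore n ω.1.2 = ω.1.2 :=
    resetBefore_eq_self <| (le_X_iff hX (fst_of_ne_zero_of_absolutelyContinuous hPA.1 hPN1
      (fun _ => last_eq_true_of_ne_zero hP0 hpM) hω) n).1 (hday_le_X ω n hω hS)
  have hP0_cond (n : Fin (M + 1)) (F) (hn : 0 < pr PA {ω | ω.2 = some n}) :=
    cpr_le_X_eq_pr_setOf_resetBefore hμ.2 hP0 hpM hX n F
      (pr_ne_zero_of_absolutelyContinuous hPA.1 hPN1 (hday_le_X · n) hn.ne')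
  constructor
  · intro hPEI n G hG hn
    rw [hPEI G n hn, hP0_cond n G hn, setOf_resetBefore_mem_eq hG]
  · intro hPNFI F n hn
    have hG (u v v') (h : ∀ k : Fin (M + 1), n ≤ k → v k = v' k) :
        (u, v) ∈ {o | (o.1, resetBefore n o.2) ∈ F} ↔
          (u, v') ∈ {o | (o.1, resetBefore n o.2) ∈ F} := by
      simp only [Set.mem_ofPred_eq, resetBefore_congr h]
    rw [hP0_cond n F hn, ← hPNFI n _ hG hn]
    refine cpr_congr_left fun ω hω hS => ?_
    simp only [Set.mem_ofPred_eq, hpast ω n hω hS]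

/-- Equivalence of (PEI) and (PNFI) for the sequential model. The objective
space is the canonical product `γ × (Fin (M+1) → Bool)` carrying the auxiliary
randomisation `U` (first coordinate) and the independent Bernoulli variables
`V_0, …, V_M` (second coordinate), with `P(V_k = 1) = p k` and `p M = 1`
(corresponding to `p n = q_n/Q_n`). The day of first success is
`X = min{n : V_n = 1}` and `𝒳 = {k : 1 ≤ k ≤ X}`. A probability `PA`
satisfying (PN) satisfies (PEI) iff it satisfies (PNFI): for every `n` and
every event `G` measurable with respect to `σ(V_n, …, V_M, U)`,
`P_A(G | S = n) = P(G)`. -/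
theorem stmt15 (M : ℕ) {γ : Type*} [Fintype γ]
    (μ : γ → ℝ) (hμ : IsProb μ)
    (p : Fin (M + 1) → ℝ) (hp : ∀ k, 0 ≤ p k ∧ p k ≤ 1) (hpM : p (Fin.last M) = 1)
    (P0 : γ × (Fin (M + 1) → Bool) → ℝ)
    (hP0 : ∀ (u : γ) (v : Fin (M + 1) → Bool),
      P0 (u, v) = μ u * ∏ k, (if v k then p k else 1 - p k))
    (X : (Fin (M + 1) → Bool) → ℕ)
    (hX : ∀ (v : Fin (M + 1) → Bool) (n : Fin (M + 1)),
      v n = true → (∀ m : Fin (M + 1), m < n → v m = false) → X v = n.val)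
    (𝒳 : γ × (Fin (M + 1) → Bool) → Finset (Fin (M + 1)))
    (h𝒳 : ∀ o, 𝒳 o = Finset.univ.filter (fun k : Fin (M + 1) => 1 ≤ k.val ∧ k.val ≤ X o.2))
    (PA : (γ × (Fin (M + 1) → Bool)) × Option (Fin (M + 1)) → ℝ) (hPA : IsProb PA)
    -- (PN)
    (hPN1 : ∀ F : Set (γ × (Fin (M + 1) → Bool)),
      pr P0 F = 0 → pr PA {ω | ω.1 ∈ F} = 0)
    (hPN2 : pr PA {ω | ∃ x : Fin (M + 1), ω.2 = some x ∧ x ∈ 𝒳 ω.1} = 1) :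
    -- (PEI) ↔ (PNFI)
    ((∀ (F : Set (γ × (Fin (M + 1) → Bool))) (n : Fin (M + 1)),
        0 < pr PA {ω | ω.2 = some n} →
        cpr PA {ω | ω.1 ∈ F} {ω | ω.2 = some n} = cpr P0 F {o | n.val ≤ X o.2})
      ↔
      (∀ (n : Fin (M + 1)) (G : Set (γ × (Fin (M + 1) → Bool))),
        -- G is measurable with respect to σ(V_n, …, V_M, U)
        (∀ (u : γ) (v v' : Fin (M + 1) → Bool),
          (∀ k : Fin (M + 1), n ≤ k → v k = v' k) → ((u, v) ∈ G ↔ (u, v') ∈ G)) →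
        0 < pr PA {ω | ω.2 = some n} →
        cpr PA {ω | ω.1 ∈ G} {ω | ω.2 = some n} = pr P0 G)) :=
  stmt15_general M μ hμ p hpM P0 hP0 X hX 𝒳 h𝒳 PA hPA hPN1 hPN2
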